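/- Suppose ≿_s satisfies PD and C_s is consistent with ≿_s. Then C_s is size monotonic: for all J ⊆ J′ ⊆ I, |C_s(J)| ≤ |C_s(J′)|. -/

import Mathlib

/-! If `|C J'| < |C J|` for `J ⊆ J'`, some type is more represented in `C J` than in `C J'`;
take a student `i ∈ C J \ C J'` of that type. Consistency gives `i ≿^{C J ∖ {i}} ∅`, and since
`C J'` holds no more students of `i`'s type than `C J ∖ {i}`, PD transfers this to
`i ≿^{C J'} ∅`. But `C J'` is below capacity and rejects `i ∈ J'`, so consistency also gives
`∅ ≻^{C J'} i`. -/

open Finset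

variable {I T S : Type*}

/-- `a` (a student or the null student `none`) is not a member of `J`. -/
def NotInOpt (a : Option I) (J : Finset I) : Prop := ∀ i ∈ a, i ∉ J

/-- Strict part `≻` of the weak priority order `ge = ≿`. -/
def StrictP (ge : Finset I → Option I → Option I → Prop) (J : Finset I) (a b : Option I) :
    Prop :=
  ge J a b ∧ ¬ ge J b a

/-- Symmetric part `∼` of the weak priority order `ge = ≿`. -/
def SimP (ge : Finset I → Option I → Option I → Prop) (J : Finset I) (a b : Option I) :
    Prop :=
  ge J a b ∧ ge J b a

/-- `tcnt τ J a` = number of students in `J` of the same type as `a` (0 for the null student). -/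
def tcnt [DecidableEq T] (τ : I → T) (J : Finset I) : Option I → ℕ
  | none => 0
  | some i => (J.filter fun x => τ x = τ i).card

/-- Completeness of each `≿ₛᴶ` on `(I∖J) ∪ {∅}`. -/
def CompleteP (q : ℕ) (ge : Finset I → Option I → Option I → Prop) : Prop :=
  ∀ J : Finset I, J.card < q → ∀ a b : Option I, NotInOpt a J → NotInOpt b J →
    ge J a b ∨ ge J b a

/-- Transitivity of each `≿ₛᴶ` on `(I∖J) ∪ {∅}`. -/
def TransP (q : ℕ) (ge : Finset I → Option I → Option I → Prop) : Prop :=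
  ∀ J : Finset I, J.card < q → ∀ a b c : Option I,
    NotInOpt a J → NotInOpt b J → NotInOpt c J → ge J a b → ge J b c → ge J a c

/-- Antisymmetry of each `≿ₛᴶ` (so that it is a linear order). -/
def AntisymP (q : ℕ) (ge : Finset I → Option I → Option I → Prop) : Prop :=
  ∀ J : Finset I, J.card < q → ∀ a b : Option I, NotInOpt a J → NotInOpt b J →
    ge J a b → ge J b a → a = b

/-- PD (preference for diversity). -/
def PD [DecidableEq T] (τ : I → T) (q : ℕ)
    (ge : Finset I → Option I → Option I → Prop) : Prop :=
  ∀ J J' : Finset I, ∀ a b : Option I,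
    J.card < q → J'.card < q →
    NotInOpt a J → NotInOpt b J → NotInOpt a J' → NotInOpt b J' →
    tcnt τ J' a ≤ tcnt τ J a → tcnt τ J b ≤ tcnt τ J' b →
    (StrictP ge J a b → StrictP ge J' a b) ∧ (ge J a b → ge J' a b)

/-- WO (within-type ordering). -/
def WO [DecidableEq T] (τ : I → T) (q : ℕ)
    (ge : Finset I → Option I → Option I → Prop) : Prop :=
  ∀ J J' : Finset I, ∀ i j : I,
    J.card < q → J'.card < q →
    i ∉ J → j ∉ J → i ∉ J' → j ∉ J' → τ i = τ j →
    (StrictP ge J (some i) (some j) → StrictP ge J' (some i) (some j)) ∧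
    (ge J (some i) (some j) → ge J' (some i) (some j))

/-- DC (distributional consistency of WO). -/
def DC [DecidableEq I] [DecidableEq T] (τ : I → T) (q : ℕ)
    (ge : Finset I → Option I → Option I → Prop) : Prop :=
  ∀ J : Finset I, ∀ i j : I, ∀ k : Option I,
    J.card + 1 < q → i ≠ j → i ∉ J → j ∉ J → NotInOpt k J →
    k ≠ some i → k ≠ some j → τ i = τ j → ge J (some i) (some j) →
    (StrictP ge (insert i J) (some j) k → StrictP ge (insert j J) (some i) k) ∧
    (SimP ge (insert i J) (some j) k → SimP ge (insert j J) (some i) k) ∧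
    (StrictP ge (insert i J) k (some j) → StrictP ge (insert j J) k (some i))

/-- The choice function `C` is consistent with the priority profile `ge = ≿ₛ`. -/
def ConsistentP [DecidableEq I] (q : ℕ)
    (ge : Finset I → Option I → Option I → Prop) (C : Finset I → Finset I) : Prop :=
  ∀ J : Finset I,
    (∀ i ∈ C J,
      (∀ j ∈ J \ C J, ge ((C J).erase i) (some i) (some j)) ∧
        ge ((C J).erase i) (some i) none) ∧
    ((C J).card < q → (C J).card < J.card →
      ∀ j ∈ J \ C J, StrictP ge (C J) none (some j))

/-- `C` is substitutable. -/
def SubstitutableP [DecidableEq I] (C : Finset I → Finset I) : Prop :=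
  ∀ (J : Finset I) (i j : I), j ∉ J → i ∈ C (insert j J) → i ∈ C J

theorem Finset.exists_mem_notMem_card_filter_lt {α β : Type*} [DecidableEq β] (f : α → β)
    {A B : Finset α} (h : B.card < A.card) :
    ∃ i ∈ A, i ∉ B ∧ (B.filter (f · = f i)).card < (A.filter (f · = f i)).card := by
  classical
  obtain ⟨t, -, ht⟩ : ∃ t ∈ (A ∪ B).image f,
      (B.filter (f · = t)).card < (A.filter (f · = t)).card := by
    apply exists_lt_of_sum_lt
    rwa [← card_eq_sum_card_fiberwise fun x hx => mem_image_of_mem f (mem_union_right _ hx),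
      ← card_eq_sum_card_fiberwise fun x hx => mem_image_of_mem f (mem_union_left _ hx)]
  obtain ⟨i, hiAt, hiB⟩ := not_subset.mp fun hsub => (card_le_card hsub).not_gt ht
  obtain ⟨hiA, rfl⟩ := mem_filter.mp hiAt
  exact ⟨i, hiA, fun hi => hiB (mem_filter.mpr ⟨hi, rfl⟩), ht⟩

theorem notInOpt_some {i : I} {J : Finset I} : NotInOpt (some i) J ↔ i ∉ J := by
  simp [NotInOpt]

theorem notInOpt_none (J : Finset I) : NotInOpt none J := by
  simp [NotInOpt]

theorem tcnt_erase_add_one [DecidableEq I] [DecidableEq T] (τ : I → T) {J : Finset I} {i : I}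
    (hi : i ∈ J) : tcnt τ (J.erase i) (some i) + 1 = tcnt τ J (some i) := by
  simp only [tcnt, filter_erase]
  exact card_erase_add_one (mem_filter.mpr ⟨hi, rfl⟩)

theorem PD.ge_none [DecidableEq T] {τ : I → T} {q : ℕ}
    {ge : Finset I → Option I → Option I → Prop} (hPD : PD τ q ge) {J J' : Finset I} {i : I}
    (hJ : J.card < q) (hJ' : J'.card < q) (hiJ : i ∉ J) (hiJ' : i ∉ J')
    (hcnt : tcnt τ J' (some i) ≤ tcnt τ J (some i)) (hge : ge J (some i) none) :
    ge J' (some i) none :=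
  (hPD J J' (some i) none hJ hJ' (notInOpt_some.mpr hiJ) (notInOpt_none J)
    (notInOpt_some.mpr hiJ') (notInOpt_none J') hcnt le_rfl).2 hge

/-- **Lemma 4.** If `≿ₛ` satisfies PD and `Cₛ` is consistent with `≿ₛ`, then `Cₛ` is size
monotonic. -/
theorem lemma4 [DecidableEq I] [DecidableEq T] (τ : I → T) (q : ℕ)
    (ge : Finset I → Option I → Option I → Prop) (hPD : PD τ q ge)
    (C : Finset I → Finset I) (hsub : ∀ J, C J ⊆ J) (hcard : ∀ J, (C J).card ≤ q)
    (hcons : ConsistentP q ge C) :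
    ∀ J J' : Finset I, J ⊆ J' → (C J).card ≤ (C J').card := by
  intro J J' hJJ'
  by_contra! hlt
  obtain ⟨i, hiJ, hiJ', hfiber⟩ := exists_mem_notMem_card_filter_lt τ hlt
  have hcnt : tcnt τ (C J') (some i) ≤ tcnt τ ((C J).erase i) (some i) := by
    have := tcnt_erase_add_one τ hiJ
    simp only [tcnt] at this ⊢
    omega
  have hqJ' : (C J').card < q := hlt.trans_le (hcard J)
  have hqJ : ((C J).erase i).card < q := (card_erase_lt_of_mem hiJ).trans_le (hcard J)
  have hacc : ge (C J') (some i) none :=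
    hPD.ge_none hqJ hqJ' (notMem_erase i _) hiJ' hcnt ((hcons J).1 i hiJ).2
  have hroom : (C J').card < J'.card :=
    hlt.trans_le ((card_le_card (hsub J)).trans (card_le_card hJJ'))
  exact ((hcons J').2 hqJ' hroom i (mem_sdiff.mpr ⟨hJJ' (hsub J hiJ), hiJ'⟩)).2 hacc
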